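/- arXiv:1802.10142 — 3 statements merged into one kernel-verified Lean document; each statement's English description precedes it below -/
import Mathlib

section
/- Let F be a forest and M ∈ M_{F,0}(F). A vertex v lies in Supp(M) if and only if v belongs to every maximum independent set of F. -/
/-!
Induct on the number of vertices. A longest path in a forest with an edge ends in two leaves, so
there is a leaf `a ≠ v`; let `b` be its neighbour. Row `a` of `M` forces every null vector to
vanish at `b`, and in a maximum independent set `b` can always be traded for `a`, so `b` satisfies
neither side. Deleting `a` and `b` changes neither side for the other vertices: null vectors of the
principal submatrix extend to null vectors of `M` (the value at `a` is solved from row `b`), and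
adding `a` turns maximum independent sets of the smaller forest into maximum independent sets of
the whole one, the independence number dropping by exactly one.
-/

open SimpleGraph Matrix
open scoped Classical

def MPattern0 {V : Type} {F : Type} [Field F] (G : SimpleGraph V)
    (M : Matrix V V F) : Prop :=
  (∀ v, M v v = 0) ∧ ∀ u v : V, u ≠ v → (M u v ≠ 0 ↔ G.Adj u v)

def nullSupp {V : Type} [Fintype V] {F : Type} [Field F] (M : Matrix V V F) : Set V :=
  {v | ∃ x : V → F, M.mulVec x = 0 ∧ x v ≠ 0}

namespace SimpleGraph

variable {V : Type*} {G : SimpleGraph V}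

lemma adj_iff_of_neighborSet_eq_singleton {a b t : V} (hab : G.neighborSet a = {b}) :
    G.Adj a t ↔ t = b :=
  Set.ext_iff.1 hab t

lemma adj_of_neighborSet_eq_singleton {a b : V} (hab : G.neighborSet a = {b}) : G.Adj a b :=
  (adj_iff_of_neighborSet_eq_singleton hab).2 rfl

lemma IsAcyclic.neighborSet_start_eq_of_isPath_forall_length_le (hG : G.IsAcyclic) {x y : V}
    {p : G.Walk x y} (hp : p.IsPath) (hnil : ¬ p.Nil)
    (hmax : ∀ (u w : V) (q : G.Walk u w), q.IsPath → q.length ≤ p.length) :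
    G.neighborSet x = {p.snd} := by
  refine Set.eq_singleton_iff_unique_mem.2 ⟨p.adj_snd hnil, fun t hxt => ?_⟩
  refine hG.eq_snd_of_adj_start hp hxt (by_contra fun ht => ?_)
  have := hmax _ _ _ (hp.cons (h := G.adj_symm hxt) ht)
  simp at this

lemma IsAcyclic.exists_neighborSet_eq_singleton_ne [Finite V] (hG : G.IsAcyclic) {u w : V}
    (huw : G.Adj u w) (v : V) : ∃ a b, G.neighborSet a = {b} ∧ a ≠ v := by
  have : Nonempty V := ⟨u⟩
  obtain ⟨x, y, p, hp, hmax⟩ := Walk.exists_isPath_forall_isPath_length_le_length G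
  have hnil : ¬ p.Nil :=
    Walk.not_nil_iff_lt_length.2 (hmax _ _ _ (Path.singleton huw).2)
  have hx := hG.neighborSet_start_eq_of_isPath_forall_length_le hp hnil hmax
  have hy := hG.neighborSet_start_eq_of_isPath_forall_length_le hp.reverse (by simpa using hnil)
    (by simpa using hmax)
  by_cases hxv : x = v
  · exact ⟨y, _, hy, fun hyv => hnil (hp.nil_iff_eq.2 (hxv.trans hyv.symm))⟩
  · exact ⟨x, _, hx, hxv⟩

end SimpleGraph

lemma Fintype.sum_eq_add_add_sum_compl_pair {ι R : Type*} [Fintype ι] [AddCommMonoid R] {a b : ι}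
    (hab : a ≠ b) (f : ι → R) : ∑ t, f t = f a + f b + ∑ t : ↥({a, b} : Set ι)ᶜ, f t := by
  rw [← Finset.sum_add_sum_compl {a, b} f, Finset.sum_pair hab]
  congr 1
  exact Finset.sum_subtype _ (by simp) f

section Pattern

variable {V F : Type} [Field F] {G : SimpleGraph V} {M : Matrix V V F}

lemma MPattern0.apply_eq_zero (hM : MPattern0 G M) {r t : V} (h : ¬ G.Adj r t) : M r t = 0 := by
  by_cases hrt : r = t
  · exact hrt ▸ hM.1 r
  · exact not_not.1 (mt (hM.2 r t hrt).1 h)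

lemma MPattern0.apply_ne_zero (hM : MPattern0 G M) {r t : V} (h : G.Adj r t) : M r t ≠ 0 :=
  (hM.2 r t h.ne).2 h

lemma MPattern0.submatrix {W : Type} (hM : MPattern0 G M) {f : W → V} (hf : f.Injective) :
    MPattern0 (G.comap f) (M.submatrix f f) :=
  ⟨fun v => hM.1 (f v), fun u v huv => hM.2 (f u) (f v) (hf.ne huv)⟩

lemma MPattern0.eq_zero_of_forall_not_adj (hM : MPattern0 G M) (h : ∀ u w, ¬ G.Adj u w) :
    M = 0 := by
  ext r t
  exact hM.apply_eq_zero (h r t)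

variable [Fintype V] {a b : V}

lemma MPattern0.mulVec_apply_of_neighborSet_eq_singleton (hM : MPattern0 G M)
    (hab : G.neighborSet a = {b}) (x : V → F) : (M *ᵥ x) a = M a b * x b := by
  refine Finset.sum_eq_single b (fun t _ htb => ?_) (by simp)
  exact mul_eq_zero_of_left
    (hM.apply_eq_zero (mt (adj_iff_of_neighborSet_eq_singleton hab).1 htb)) _

lemma MPattern0.notMem_nullSupp_of_neighborSet_eq_singleton (hM : MPattern0 G M)
    (hab : G.neighborSet a = {b}) : b ∉ nullSupp M := by
  rintro ⟨x, hx, hxb⟩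
  have hrow := hM.mulVec_apply_of_neighborSet_eq_singleton hab x
  rw [hx] at hrow
  exact mul_ne_zero (hM.apply_ne_zero (adj_of_neighborSet_eq_singleton hab)) hxb
    hrow.symm

end Pattern

section LeafRemoval

variable {V F : Type} [Field F] [Fintype V] {G : SimpleGraph V} {M : Matrix V V F} {a b : V}

lemma MPattern0.mulVec_apply_eq_submatrix_mulVec (hM : MPattern0 G M)
    (hab : G.neighborSet a = {b}) {x : V → F} (hxb : x b = 0) (r : ↥({a, b} : Set V)ᶜ) :
    (M *ᵥ x) r =
      (M.submatrix Subtype.val Subtype.val *ᵥ (x ∘ (Subtype.val : ↥({a, b} : Set V)ᶜ → V))) r := by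
  have hne : a ≠ b := G.ne_of_adj (adj_of_neighborSet_eq_singleton hab)
  have hra : ¬ G.Adj r a := fun h =>
    r.2 (Or.inr ((adj_iff_of_neighborSet_eq_singleton hab).1 h.symm))
  rw [mulVec, dotProduct, Fintype.sum_eq_add_add_sum_compl_pair hne, hM.apply_eq_zero hra, hxb,
    zero_mul, mul_zero, zero_add, zero_add]
  rfl

lemma MPattern0.exists_mulVec_eq_zero_comp_val_eq (hM : MPattern0 G M)
    (hab : G.neighborSet a = {b}) {y : ↥({a, b} : Set V)ᶜ → F}
    (hy : M.submatrix (Subtype.val : ↥({a, b} : Set V)ᶜ → V) Subtype.val *ᵥ y = 0) :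
    ∃ x : V → F, M *ᵥ x = 0 ∧ x ∘ Subtype.val = y := by
  have hba : G.Adj b a := (adj_of_neighborSet_eq_singleton hab).symm
  have hne : a ≠ b := hba.ne'
  have notMem : ∀ t, t = a ∨ t = b → ¬ ∃ r : ↥({a, b} : Set V)ᶜ, (r : V) = t :=
    fun t ht ⟨r, hr⟩ => r.2 (hr ▸ ht)
  -- `x a` is chosen so that the row of `b` vanishes
  obtain ⟨x, hxa, hxb, hxy⟩ : ∃ x : V → F,
      x a = -(∑ t : ↥({a, b} : Set V)ᶜ, M b t * y t) / M b a ∧ x b = 0 ∧ x ∘ Subtype.val = y :=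
    ⟨Function.extend Subtype.val y (Pi.single a _),
      by rw [Function.extend_apply' _ _ _ (notMem a (Or.inl rfl)), Pi.single_eq_same],
      by rw [Function.extend_apply' _ _ _ (notMem b (Or.inr rfl)), Pi.single_eq_of_ne hne.symm],
      Function.extend_comp Subtype.val_injective _ _⟩
  have hxy' : ∀ t : ↥({a, b} : Set V)ᶜ, x t = y t := congrFun hxy
  refine ⟨x, funext fun r => ?_, hxy⟩
  by_cases hr : r = a ∨ r = b
  · rcases hr with rfl | rfl
    · rw [hM.mulVec_apply_of_neighborSet_eq_singleton hab, hxb, mul_zero, Pi.zero_apply]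
    · rw [mulVec, dotProduct, Fintype.sum_eq_add_add_sum_compl_pair hne, hxa, hxb, hM.1,
        zero_mul, add_zero]
      simp only [hxy', Pi.zero_apply]
      rw [mul_div_cancel₀ _ (hM.apply_ne_zero hba), neg_add_cancel]
  · have := hM.mulVec_apply_eq_submatrix_mulVec hab hxb ⟨r, hr⟩
    rw [hxy, hy] at this
    exact this

lemma MPattern0.val_mem_nullSupp_iff (hM : MPattern0 G M) (hab : G.neighborSet a = {b})
    (v : ↥({a, b} : Set V)ᶜ) :
    (v : V) ∈ nullSupp M ↔ v ∈ nullSupp (M.submatrix Subtype.val Subtype.val) := by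
  constructor
  · rintro ⟨x, hx, hxv⟩
    have hxb : x b = 0 := by_contra fun h =>
      hM.notMem_nullSupp_of_neighborSet_eq_singleton hab ⟨x, hx, h⟩
    refine ⟨x ∘ Subtype.val, funext fun r => ?_, hxv⟩
    rw [← hM.mulVec_apply_eq_submatrix_mulVec hab hxb, hx]
    rfl
  · rintro ⟨y, hy, hyv⟩
    obtain ⟨x, hx, rfl⟩ := hM.exists_mulVec_eq_zero_comp_val_eq hab hy
    exact ⟨x, hx, hyv⟩

end LeafRemoval

open Finset

lemma Finset.card_insert_map_subtype_compl_pair {V : Type} {a b : V}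
    (J : Finset ↥({a, b} : Set V)ᶜ) :
    #(insert a (J.map (Function.Embedding.subtype _))) = #J + 1 := by
  rw [card_insert_of_notMem (by simp), card_map]

namespace SimpleGraph

variable {V : Type} {G : SimpleGraph V} {a b : V}

lemma IsIndepSet.insert_of_neighborSet_eq_singleton (hab : G.neighborSet a = {b}) {s : Set V}
    (hs : G.IsIndepSet s) (hb : b ∉ s) : G.IsIndepSet (insert a s) := by
  have hadj : ∀ {t}, G.Adj a t ↔ t = b := adj_iff_of_neighborSet_eq_singleton hab
  exact hs.insert fun t ht _ =>
    ⟨fun h => hb (hadj.1 h ▸ ht), fun h => hb (hadj.1 h.symm ▸ ht)⟩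

lemma IsIndepSet.card_le_card_subtype_add_one (hab : G.Adj a b) {K : Finset V}
    (hK : G.IsIndepSet K) : #K ≤ #(K.subtype (· ∈ ({a, b} : Set V)ᶜ)) + 1 := by
  rw [Finset.card_subtype, ← K.card_filter_add_card_filter_not (· ∈ ({a, b} : Set V)ᶜ)]
  refine Nat.add_le_add_left (Finset.card_le_one.2 fun x hx y hy => by_contra fun hxy => ?_) _
  simp only [Finset.mem_filter, Set.mem_compl_iff, not_not, Set.mem_insert_iff,
    Set.mem_singleton_iff] at hx hy
  refine hK hx.1 hy.1 hxy ?_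
  rcases hx.2 with rfl | rfl <;> rcases hy.2 with rfl | rfl
  exacts [absurd rfl hxy, hab, hab.symm, absurd rfl hxy]

lemma IsIndepSet.subtype {s : Set V} [DecidablePred (· ∈ s)] {K : Finset V}
    (hK : G.IsIndepSet K) :
    (G.induce s).IsIndepSet (K.subtype (· ∈ s)) := fun _ hx _ hy hxy =>
  hK (Finset.mem_subtype.1 hx) (Finset.mem_subtype.1 hy) (Subtype.coe_injective.ne hxy)

lemma IsIndepSet.insert_map_subtype (hab : G.neighborSet a = {b})
    {J : Finset ↥({a, b} : Set V)ᶜ} (hJ : (G.induce ({a, b} : Set V)ᶜ).IsIndepSet J) :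
    G.IsIndepSet (↑(insert a (J.map (Function.Embedding.subtype _)) : Finset V)) := by
  rw [Finset.coe_insert, Finset.coe_map]
  refine IsIndepSet.insert_of_neighborSet_eq_singleton hab ?_ ?_
  · rintro _ ⟨x, hx, rfl⟩ _ ⟨y, hy, rfl⟩ hxy
    exact hJ hx hy (ne_of_apply_ne _ hxy)
  · rintro ⟨x, -, hx⟩
    exact x.2 (Or.inr hx)

variable [Fintype V]

lemma exists_isMaximumIndepSet_notMem (hab : G.neighborSet a = {b}) :
    ∃ I, G.IsMaximumIndepSet I ∧ b ∉ I := by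
  obtain ⟨I, hI⟩ := G.maximumIndepSet_exists
  by_cases hbI : b ∈ I
  swap
  · exact ⟨I, hI, hbI⟩
  have hne : a ≠ b := G.ne_of_adj (adj_of_neighborSet_eq_singleton hab)
  have haI : a ∉ I := fun haI =>
    hI.1 haI hbI hne (adj_of_neighborSet_eq_singleton hab)
  refine ⟨insert a (I.erase b), ⟨?_, fun J hJ => ?_⟩, ?_⟩
  · rw [Finset.coe_insert]
    have hIb : G.IsIndepSet ↑(I.erase b) := hI.1.mono (Finset.coe_subset.2 (I.erase_subset b))
    exact hIb.insert_of_neighborSet_eq_singleton hab (by simp)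
  · rw [Finset.card_insert_of_notMem (fun h => haI (Finset.mem_of_mem_erase h)),
      Finset.card_erase_add_one hbI]
    exact hI.2 J hJ
  · simp [hne.symm]

lemma IsMaximumIndepSet.insert_map_subtype (hab : G.neighborSet a = {b})
    {J : Finset ↥({a, b} : Set V)ᶜ} (hJ : (G.induce ({a, b} : Set V)ᶜ).IsMaximumIndepSet J) :
    G.IsMaximumIndepSet (insert a (J.map (Function.Embedding.subtype _))) := by
  refine ⟨hJ.1.insert_map_subtype hab, fun K hK => ?_⟩
  rw [card_insert_map_subtype_compl_pair]
  exact (hK.card_le_card_subtype_add_one (adj_of_neighborSet_eq_singleton hab)).trans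
    (Nat.add_le_add_right (hJ.2 _ hK.subtype) 1)

lemma IsMaximumIndepSet.subtype_compl_pair (hab : G.neighborSet a = {b}) {I : Finset V}
    (hI : G.IsMaximumIndepSet I) :
    (G.induce ({a, b} : Set V)ᶜ).IsMaximumIndepSet (I.subtype (· ∈ ({a, b} : Set V)ᶜ)) := by
  refine ⟨hI.1.subtype, fun J hJ => ?_⟩
  have := (hI.2 _ (hJ.insert_map_subtype hab)).trans
    (hI.1.card_le_card_subtype_add_one (adj_of_neighborSet_eq_singleton hab))
  rw [card_insert_map_subtype_compl_pair] at this
  omega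

lemma forall_isMaximumIndepSet_val_mem_iff (hab : G.neighborSet a = {b})
    (v : ↥({a, b} : Set V)ᶜ) :
    (∀ I, G.IsMaximumIndepSet I → (v : V) ∈ I) ↔
      ∀ J, (G.induce ({a, b} : Set V)ᶜ).IsMaximumIndepSet J → v ∈ J := by
  refine ⟨fun h J hJ => ?_, fun h I hI => Finset.mem_subtype.1 (h _ (hI.subtype_compl_pair hab))⟩
  have hv := (Finset.mem_insert.1 (h _ (hJ.insert_map_subtype hab))).resolve_left
    fun h => v.2 (Or.inl h)
  exact (Finset.mem_map' _).1 hv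

end SimpleGraph

lemma SimpleGraph.IsMaximumIndepSet.eq_univ_of_forall_not_adj {V : Type} [Fintype V]
    {G : SimpleGraph V} (h : ∀ u w, ¬ G.Adj u w) {I : Finset V} (hI : G.IsMaximumIndepSet I) :
    I = Finset.univ :=
  I.eq_univ_of_card <| le_antisymm I.card_le_univ <|
    Finset.card_univ (α := V) ▸ hI.2 Finset.univ fun x _ y _ _ => h x y

theorem MPattern0.mem_nullSupp_iff_forall_isMaximumIndepSet {V F : Type} [Field F] [Fintype V]
    {G : SimpleGraph V} {M : Matrix V V F} (hM : MPattern0 G M) (hG : G.IsAcyclic) (v : V) :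
    v ∈ nullSupp M ↔ ∀ I, G.IsMaximumIndepSet I → v ∈ I := by
  induction hn : Fintype.card V using Nat.strong_induction_on generalizing V with
  | _ n ih =>
  by_cases hE : ∀ u w, ¬ G.Adj u w
  · refine iff_of_true ⟨fun _ => 1, ?_, one_ne_zero⟩ fun I hI => ?_
    · rw [hM.eq_zero_of_forall_not_adj hE, zero_mulVec]
    · exact hI.eq_univ_of_forall_not_adj hE ▸ Finset.mem_univ v
  push Not at hE
  obtain ⟨u, w, huw⟩ := hE
  obtain ⟨a, b, hab, hav⟩ := hG.exists_neighborSet_eq_singleton_ne huw v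
  by_cases hvb : v = b
  · subst hvb
    obtain ⟨I, hI, hvI⟩ := exists_isMaximumIndepSet_notMem hab
    exact iff_of_false (hM.notMem_nullSupp_of_neighborSet_eq_singleton hab) fun h => hvI (h I hI)
  obtain ⟨v, rfl⟩ : ∃ v' : ↥({a, b} : Set V)ᶜ, (v' : V) = v :=
    ⟨⟨v, by simp [hav.symm, hvb]⟩, rfl⟩
  rw [hM.val_mem_nullSupp_iff hab, forall_isMaximumIndepSet_val_mem_iff hab]
  exact ih _ (hn ▸ Fintype.card_subtype_lt (x := a) (by simp))
    (hM.submatrix Subtype.val_injective) (hG.induce _) v rfl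

theorem stmt10_general {V : Type} [Fintype V] {F : Type} [Field F]
    (G : SimpleGraph V) (hG : G.IsAcyclic) (M : Matrix V V F)
    (hM : MPattern0 G M) (v : V) :
    v ∈ nullSupp M ↔
      ∀ I : Finset V,
        ((↑I : Set V).Pairwise (fun a b => ¬ G.Adj a b) ∧
          ∀ J : Finset V, (↑J : Set V).Pairwise (fun a b => ¬ G.Adj a b) →
            J.card ≤ I.card) →
        v ∈ I :=
  (hM.mem_nullSupp_iff_forall_isMaximumIndepSet hG v).trans
    (forall_congr' fun _ => imp_congr_left (isMaximumIndepSet_iff _ _))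

theorem stmt10 {V : Type} [Fintype V] [DecidableEq V] {F : Type} [Field F]
    (G : SimpleGraph V) (hG : G.IsAcyclic) (M : Matrix V V F)
    (hM : MPattern0 G M) (v : V) :
    v ∈ nullSupp M ↔
      ∀ I : Finset V,
        ((↑I : Set V).Pairwise (fun a b => ¬ G.Adj a b) ∧
          ∀ J : Finset V, (↑J : Set V).Pairwise (fun a b => ¬ G.Adj a b) →
            J.card ≤ I.card) →
        v ∈ I :=
  stmt10_general G hG M hM v
end

section
/- If F is a forest, then the rank of its adjacency matrix over any field equals twice the matching number of F. -/
open SimpleGraph Matrix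
open scoped Classical

/-- A finite set of edges of G that are pairwise disjoint. -/
def IsMatchingSet {V : Type} (G : SimpleGraph V) (s : Finset (Sym2 V)) : Prop :=
  (∀ e ∈ s, e ∈ G.edgeSet) ∧
    (↑s : Set (Sym2 V)).Pairwise (fun e f => ∀ v : V, ¬ (v ∈ e ∧ v ∈ f))

/-!
A forest with an edge has a leaf `u`; let `v` be its neighbour, and let `G'` be the forest
obtained by deleting every edge at `u` or `v`. Then `ν(G) = ν(G') + 1`: a maximum matching of `G'`
extends by `uv`, and at most one edge of a matching of `G` meets `{u, v}`, since every edge at `u`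
contains `v`. Listing `u, v` first, `A(G)` has the invertible block `[[0, 1], [1, 0]]` on
`{u, v}`, and its Schur complement is the rest of `A(G')`, because the only entry of row or column
`u` is at `v`. Hence `rank A(G) = rank A(G') + 2`, and induction on `G` gives
`rank A(G) = 2 ν(G)`.
-/

namespace Matrix

variable {l m n o K : Type*} [Field K]

theorem rank_fromBlocks_zero₁₂_zero₂₁ [Fintype n] [Fintype o] (A : Matrix m n K)
    (D : Matrix l o K) : (fromBlocks A 0 0 D).rank = A.rank + D.rank := by
  let eRow := LinearEquiv.sumArrowLequivProdArrow m l K K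
  let eCol := LinearEquiv.sumArrowLequivProdArrow n o K K
  have hmul : (fromBlocks A 0 0 D).mulVecLin =
      eRow.symm.toLinearMap ∘ₗ A.mulVecLin.prodMap D.mulVecLin ∘ₗ eCol.toLinearMap := by
    refine LinearMap.ext fun x => funext fun i => ?_
    rcases i with i | i <;> simp [eRow, eCol, fromBlocks_mulVec] <;> rfl
  let eProd : (LinearMap.range A.mulVecLin).prod (LinearMap.range D.mulVecLin) ≃ₗ[K]
      LinearMap.range A.mulVecLin × LinearMap.range D.mulVecLin :=
    { Equiv.subtypeProdEquivProd with map_add' := fun _ _ => rfl, map_smul' := fun _ _ => rfl }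
  rw [rank, hmul, LinearMap.range_comp, LinearMap.range_comp_of_range_eq_top _ eCol.range,
    LinearMap.range_prodMap, LinearEquiv.finrank_map_eq, eProd.finrank_eq, Module.finrank_prod]
  rfl

theorem rank_fromBlocks_of_invertible₁₁ [Fintype l] [DecidableEq l] [Fintype m] [DecidableEq m]
    [Fintype n] [DecidableEq n] (A : Matrix m m K) (B : Matrix m n K) (C : Matrix l m K)
    (D : Matrix l n K) [Invertible A] :
    (fromBlocks A B C D).rank = A.rank + (D - C * ⅟A * B).rank := by
  rw [fromBlocks_eq_of_invertible₁₁, rank_mul_eq_left_of_isUnit_det,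
    rank_mul_eq_right_of_isUnit_det, rank_fromBlocks_zero₁₂_zero₂₁] <;> simp

end Matrix

namespace SimpleGraph

variable {V : Type*} {G : SimpleGraph V}

theorem IsAcyclic.exists_adj_forall_adj_eq [Finite V] (hG : G.IsAcyclic) (hne : G ≠ ⊥) :
    ∃ u v, G.Adj u v ∧ ∀ w, G.Adj u w → w = v := by
  obtain ⟨a, b, hab⟩ := ne_bot_iff_exists_adj.mp hne
  have : Nonempty V := ⟨a⟩
  obtain ⟨u, x, p, hp, hmax⟩ := Walk.exists_isPath_forall_isPath_length_le_length G
  have hnil : ¬p.Nil := by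
    intro hnil
    have := hmax _ _ _ (Path.singleton hab).2
    simp [Walk.length_eq_zero_iff.mpr hnil] at this
  refine ⟨u, p.snd, p.adj_snd hnil, fun w hw => hG.eq_snd_of_adj_start hp hw ?_⟩
  by_contra hws
  have := hmax _ _ _ (hp.cons hws (h := hw.symm))
  simp at this

theorem mem_edgeSet_deleteIncidenceSet_deleteIncidenceSet {u v : V} {e : Sym2 V} :
    e ∈ ((G.deleteIncidenceSet u).deleteIncidenceSet v).edgeSet ↔
      e ∈ G.edgeSet ∧ u ∉ e ∧ v ∉ e := by
  simp only [edgeSet_deleteIncidenceSet, incidenceSet, Set.mem_sdiff, Set.mem_ofPred_eq]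
  tauto

theorem submatrix_sumCompl_adjMatrix_deleteIncidenceSet [Fintype V] [DecidableRel G.Adj]
    (F : Type*) [Field F] (u v : V) :
    let e := Equiv.sumCompl (· ∈ ({u, v} : Finset V))
    (((G.deleteIncidenceSet u).deleteIncidenceSet v).adjMatrix F).submatrix e e =
      fromBlocks 0 0 0 ((G.adjMatrix F).submatrix e e).toBlocks₂₂ := by
  ext (⟨i, hi⟩ | ⟨i, hi⟩) (⟨j, hj⟩ | ⟨j, hj⟩)
  all_goals
    simp only [Finset.mem_insert, Finset.mem_singleton] at hi hj
    simp [toBlocks₂₂, deleteIncidenceSet_adj]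
    grind

theorem rank_adjMatrix_eq_rank_deleteIncidenceSet_add_two [Fintype V] [DecidableRel G.Adj]
    {F : Type*} [Field F] {u v : V} (huv : G.Adj u v)
    (hu : ∀ w, G.Adj u w → w = v) :
    (G.adjMatrix F).rank =
      (((G.deleteIncidenceSet u).deleteIncidenceSet v).adjMatrix F).rank + 2 := by
  set G' := (G.deleteIncidenceSet u).deleteIncidenceSet v
  set s : Finset V := {u, v}
  let e := Equiv.sumCompl (· ∈ s)
  have hA : ∀ x, x ≠ v → G.adjMatrix F u x = 0 ∧ G.adjMatrix F x u = 0 := fun x hx => by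
    simp only [adjMatrix_apply, ite_eq_right_iff, one_ne_zero, imp_false]
    exact ⟨fun h => hx (hu x h), fun h => hx (hu x h.symm)⟩
  set M := (G.adjMatrix F).submatrix e e
  set K := M.toBlocks₁₁
  let a : s := ⟨u, by simp [s]⟩
  let b : s := ⟨v, by simp [s]⟩
  have hab : ∀ i : s, i = a ∨ i = b := by
    rintro ⟨i, hi⟩
    simpa [s, a, b, Subtype.ext_iff] using hi
  have hK : K = (Equiv.swap a b).permMatrix F := by
    ext i j
    rcases hab i with rfl | rfl <;> rcases hab j with rfl | rfl <;>
      simp [K, M, e, a, b, toBlocks₁₁, PEquiv.toMatrix_apply, huv, huv.symm, huv.ne, huv.ne.symm]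
  have hKK : K * K = 1 := by
    rw [hK, ← permMatrix_mul, Equiv.swap_mul_self, permMatrix_one]
  let : Invertible K := ⟨K, hKK, hKK⟩
  have hCKB : M.toBlocks₂₁ * ⅟K * M.toBlocks₁₂ = 0 := by
    have hC : ∀ x, M.toBlocks₂₁ x a = 0 := fun x => (hA x (by grind)).2
    have hB : ∀ y, M.toBlocks₁₂ a y = 0 := fun y => (hA y (by grind)).1
    have hKb : K b b = 0 := by simp [hK, PEquiv.toMatrix_apply, a, b, huv.ne]
    ext x y
    simp only [mul_apply, Finset.sum_mul, Matrix.zero_apply]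
    refine Finset.sum_eq_zero fun j _ => Finset.sum_eq_zero fun i _ => ?_
    rcases hab j with rfl | rfl
    · rw [hB, mul_zero]
    rcases hab i with rfl | rfl
    · rw [hC, zero_mul, zero_mul]
    · rw [show ⅟K = K from rfl, hKb, mul_zero, zero_mul]
  have hKrank : K.rank = 2 := by
    rw [rank_of_isUnit K (isUnit_of_invertible K), Fintype.card_coe, Finset.card_pair huv.ne]
  have hG : (G.adjMatrix F).rank = 2 + M.toBlocks₂₂.rank := calc
    (G.adjMatrix F).rank = M.rank := (rank_submatrix _ e e).symm
    _ = (fromBlocks K M.toBlocks₁₂ M.toBlocks₂₁ M.toBlocks₂₂).rank := by rw [fromBlocks_toBlocks]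
    _ = 2 + M.toBlocks₂₂.rank := by rw [rank_fromBlocks_of_invertible₁₁, hCKB, sub_zero, hKrank]
  have hG' : (G'.adjMatrix F).rank = M.toBlocks₂₂.rank := by
    rw [← rank_submatrix _ e e, submatrix_sumCompl_adjMatrix_deleteIncidenceSet,
      rank_fromBlocks_zero₁₂_zero₂₁, rank_zero, zero_add]
  rw [hG, hG', add_comm]

end SimpleGraph

namespace IsMatchingSet

variable {V : Type} {G H : SimpleGraph V} {s t : Finset (Sym2 V)}

theorem subset (hs : IsMatchingSet G s) (hts : t ⊆ s) : IsMatchingSet G t :=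
  ⟨fun e he => hs.1 e (hts he), hs.2.mono (by simpa using hts)⟩

theorem mono (hs : IsMatchingSet G s) (hGH : G ≤ H) : IsMatchingSet H s :=
  ⟨fun e he => edgeSet_mono hGH (hs.1 e he), hs.2⟩

theorem insert_mk (hs : IsMatchingSet G s) {u v : V} (huv : G.Adj u v)
    (hfree : ∀ e ∈ s, u ∉ e ∧ v ∉ e) : IsMatchingSet G (insert s(u, v) s) := by
  refine ⟨?_, ?_⟩
  · simpa [huv] using hs.1
  · have hdisj : ∀ e ∈ s, ∀ x, x ∈ e → x ∉ s(u, v) := by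
      intro e he x hxe hx
      rcases Sym2.mem_iff.mp hx with rfl | rfl
      exacts [(hfree e he).1 hxe, (hfree e he).2 hxe]
    rw [Finset.coe_insert, Set.pairwise_insert]
    exact ⟨hs.2, fun e he _ => ⟨fun x hx => hdisj e he x hx.2 hx.1,
      fun x hx => hdisj e he x hx.1 hx.2⟩⟩

theorem card_filter_mem_le_one (hs : IsMatchingSet G s) (v : V) :
    (s.filter (v ∈ ·)).card ≤ 1 := by
  refine Finset.card_le_one.mpr fun e he f hf => ?_
  rw [Finset.mem_filter] at he hf
  by_contra hef
  exact hs.2 he.1 hf.1 hef v ⟨he.2, hf.2⟩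

end IsMatchingSet

def IsMatchingNumber {V : Type} (G : SimpleGraph V) (m : ℕ) : Prop :=
  ∃ s, IsMatchingSet G s ∧ s.card = m ∧ ∀ t, IsMatchingSet G t → t.card ≤ m

theorem exists_isMatchingNumber {V : Type} [Finite V] (G : SimpleGraph V) :
    ∃ m, IsMatchingNumber G m := by
  have := Fintype.ofFinite V
  obtain ⟨s, hs, hmax⟩ := (Finset.univ.filter (IsMatchingSet G)).exists_max_image Finset.card
    ⟨∅, by simp [IsMatchingSet]⟩
  exact ⟨s.card, s, (Finset.mem_filter.mp hs).2, rfl, fun t ht => hmax t (by simpa using ht)⟩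

namespace IsMatchingNumber

variable {V : Type} {G : SimpleGraph V} {m n : ℕ}

theorem unique (hm : IsMatchingNumber G m) (hn : IsMatchingNumber G n) : m = n := by
  obtain ⟨s, hs, rfl, hsmax⟩ := hm
  obtain ⟨t, ht, rfl, htmax⟩ := hn
  exact le_antisymm (htmax s hs) (hsmax t ht)

theorem eq_zero_of_bot (hm : IsMatchingNumber (⊥ : SimpleGraph V) m) : m = 0 := by
  obtain ⟨s, hs, rfl, -⟩ := hm
  exact Finset.card_eq_zero.mpr
    (Finset.eq_empty_of_forall_notMem fun e he => by simpa using hs.1 e he)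

theorem succ_of_deleteIncidenceSet {u v : V} (huv : G.Adj u v) (hu : ∀ w, G.Adj u w → w = v)
    (hm : IsMatchingNumber ((G.deleteIncidenceSet u).deleteIncidenceSet v) m) :
    IsMatchingNumber G (m + 1) := by
  obtain ⟨t, ht, rfl, hmax⟩ := hm
  have hv_of_hu : ∀ e ∈ G.edgeSet, u ∈ e → v ∈ e := by
    intro e he hue
    induction e using Sym2.ind with
    | _ x y =>
      rcases Sym2.mem_iff.mp hue with rfl | rfl
      · simp [hu y he]
      · simp [hu x (G.adj_symm he)]
  have hfree : ∀ e ∈ t, u ∉ e ∧ v ∉ e := fun e he =>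
    (mem_edgeSet_deleteIncidenceSet_deleteIncidenceSet.mp (ht.1 e he)).2
  refine ⟨insert s(u, v) t, ?_, ?_, fun s hs => ?_⟩
  · exact (ht.mono ((deleteIncidenceSet_le _ v).trans (deleteIncidenceSet_le G u))).insert_mk
      huv hfree
  · exact Finset.card_insert_of_notMem fun h => (hfree _ h).1 (Sym2.mem_mk_left u v)
  · have hrest : IsMatchingSet ((G.deleteIncidenceSet u).deleteIncidenceSet v)
        (s.filter (v ∉ ·)) := by
      refine ⟨fun e he => ?_, (hs.subset (Finset.filter_subset _ s)).2⟩
      obtain ⟨he, hve⟩ := Finset.mem_filter.mp he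
      exact mem_edgeSet_deleteIncidenceSet_deleteIncidenceSet.mpr
        ⟨hs.1 e he, fun hue => hve (hv_of_hu e (hs.1 e he) hue), hve⟩
    have := hmax _ hrest
    have := hs.card_filter_mem_le_one v
    have := Finset.card_filter_add_card_filter_not (s := s) (v ∈ ·)
    omega

end IsMatchingNumber

theorem SimpleGraph.IsAcyclic.rank_adjMatrix_eq_two_mul {V : Type} [Fintype V]
    {G : SimpleGraph V} [DecidableRel G.Adj] {F : Type*} [Field F]
    (hG : G.IsAcyclic) {m : ℕ} (hm : IsMatchingNumber G m) : (G.adjMatrix F).rank = 2 * m := by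
  -- the induction hypothesis must hold for the decidability instance inferred on smaller graphs
  revert ‹DecidableRel G.Adj›
  induction G using WellFoundedLT.induction generalizing m with
  | _ G ih =>
  intro
  rcases eq_or_ne G ⊥ with rfl | hne
  · have hA : (⊥ : SimpleGraph V).adjMatrix F = 0 := by ext; simp [adjMatrix_apply]
    rw [hA, rank_zero, hm.eq_zero_of_bot]
  obtain ⟨u, v, huv, hu⟩ := hG.exists_adj_forall_adj_eq hne
  have hlt : (G.deleteIncidenceSet u).deleteIncidenceSet v < G := by
    refine lt_of_le_not_ge ((deleteIncidenceSet_le _ v).trans (deleteIncidenceSet_le G u)) ?_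
    intro hle
    simpa [deleteIncidenceSet_adj] using hle huv
  obtain ⟨m', hm'⟩ := exists_isMatchingNumber ((G.deleteIncidenceSet u).deleteIncidenceSet v)
  rw [← (hm'.succ_of_deleteIncidenceSet huv hu).unique hm,
    rank_adjMatrix_eq_rank_deleteIncidenceSet_add_two huv hu, ih _ hlt (hG.anti hlt.le) hm']
  ring

theorem stmt12_general {V : Type} [Fintype V] {F : Type} [Field F]
    (G : SimpleGraph V) (hG : G.IsAcyclic) (m : ℕ)
    (hm : ∃ s : Finset (Sym2 V), IsMatchingSet G s ∧ s.card = m ∧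
      ∀ t : Finset (Sym2 V), IsMatchingSet G t → t.card ≤ m) :
    (G.adjMatrix F).rank = 2 * m :=
  hG.rank_adjMatrix_eq_two_mul hm

theorem stmt12 {V : Type} [Fintype V] [DecidableEq V] {F : Type} [Field F]
    (G : SimpleGraph V) (hG : G.IsAcyclic) (m : ℕ)
    (hm : ∃ s : Finset (Sym2 V), IsMatchingSet G s ∧ s.card = m ∧
      ∀ t : Finset (Sym2 V), IsMatchingSet G t → t.card ≤ m) :
    (G.adjMatrix F).rank = 2 * m :=
  stmt12_general G hG m hm
end

section
/- Let F be a forest. Then B(F) := ⋃_{v ∉ Supp(A(F))} { e_v, s_v(F) } \ {0} is a basis for the column space of the adjacency matrix A(F), where s_v(F) = Σ_{w ∈ Supp(A(F)) ∩ N(v)} e_w. -/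
open SimpleGraph Matrix
open scoped Classical

/-- The supported-neighborhood vector of v:
s_v(M) = Σ_{w ∈ Supp(M) ∩ N(v)} M_{v,w} e_w. -/
noncomputable def sVec {V : Type} [Fintype V] {F : Type} [Field F]
    (G : SimpleGraph V) (M : Matrix V V F) (v : V) : V → F :=
  fun w => if w ∈ nullSupp M ∧ G.Adj v w then M v w else 0

/-!
Write `A` for the adjacency matrix and `S` for its null support. Since `A` is symmetric, its range
consists of the vectors orthogonal to all null vectors `x`. Null vectors vanish off `S`, so the
range contains `e_v` for `v ∉ S`, and every `s_v`, as `x ⬝ᵥ s_v = (A x)_v = 0`. Conversely,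
column `w` of `A` is `s_w` plus the `e_y` over the neighbours `y ∉ S` of `w`, and `s_w = 0` for
`w ∈ S` because in a forest no two vertices of `S` are adjacent (induct by deleting the edges at
the neighbour of a leaf).

The `e_v` are supported on `Sᶜ` and the `s_v` on `S`. A nonzero `s_v` has at least two neighbours
in `S`: if `y` were the only one, then `x y = x ⬝ᵥ s_v = 0` for every null vector `x`, so `y ∉ S`.
Hence in a linear dependency among the `s_v`, the vertices with nonzero coefficient together with
their neighbours in `S` form a nonempty set in which every vertex has two neighbours, and a forest
contains no such set.
-/

theorem Matrix.mem_range_mulVecLin_iff {m n K : Type} [Fintype m] [DecidableEq m] [Fintype n]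
    [Field K] (M : Matrix m n K) (y : m → K) :
    y ∈ LinearMap.range M.mulVecLin ↔ ∀ x : m → K, x ᵥ* M = 0 → x ⬝ᵥ y = 0 := by
  constructor
  · rintro ⟨z, rfl⟩ x hx
    rw [mulVecLin_apply, dotProduct_mulVec, hx, zero_dotProduct]
  · intro h
    rw [← Subspace.forall_mem_dualAnnihilator_apply_eq_zero_iff]
    intro φ hφ
    set c := (dotProductEquiv K m).symm φ
    have hc : ∀ w, φ w = c ⬝ᵥ w := fun w => by
      rw [← (dotProductEquiv K m).apply_symm_apply φ]; rfl
    have hcM : c ᵥ* M = 0 := dotProduct_eq_zero _ fun z => by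
      rw [← dotProduct_mulVec, ← hc]
      exact (Submodule.mem_dualAnnihilator φ).mp hφ _ ⟨z, rfl⟩
    rw [hc]
    exact h c hcM

theorem Matrix.IsSymm.mem_range_mulVecLin_iff {n K : Type} [Fintype n] [DecidableEq n] [Field K]
    {M : Matrix n n K} (hM : M.IsSymm) (y : n → K) :
    y ∈ LinearMap.range M.mulVecLin ↔ ∀ x : n → K, M *ᵥ x = 0 → x ⬝ᵥ y = 0 := by
  rw [Matrix.mem_range_mulVecLin_iff]
  simp only [← vecMul_transpose, hM.eq]

lemma apply_eq_zero_of_notMem_nullSupp {V F : Type} [Fintype V] [Field F] {M : Matrix V V F}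
    {x : V → F} (hx : M *ᵥ x = 0) {w : V} (hw : w ∉ nullSupp M) : x w = 0 := by
  by_contra h
  exact hw ⟨x, hx, h⟩

namespace SimpleGraph

variable {V : Type} {G : SimpleGraph V}

section Forest

lemma IsAcyclic.exists_forall_adj_iff [Finite V] (hG : G.IsAcyclic) {a b : V}
    (hab : G.Adj a b) : ∃ u v, ∀ w, G.Adj u w ↔ w = v := by
  have : Nonempty V := ⟨a⟩
  obtain ⟨u, _, p, hp, hmax⟩ := Walk.exists_isPath_forall_isPath_length_le_length G
  have hnil : ¬p.Nil := fun h => by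
    have := hmax _ _ _ (Path.singleton hab).2
    simp [h.length_eq_zero] at this
  refine ⟨u, p.snd, fun w => ⟨fun huw => hG.eq_snd_of_adj_start hp huw ?_,
    fun h => h ▸ p.adj_snd hnil⟩⟩
  by_contra hw
  have := hmax _ _ _ (hp.cons hw (h := huw.symm))
  simp at this

lemma IsAcyclic.not_forall_nontrivial_neighborSet_inter [Finite V] (hG : G.IsAcyclic)
    {U : Set V} (hU : U.Nonempty) : ¬∀ u ∈ U, (G.neighborSet u ∩ U).Nontrivial := by
  intro h
  obtain ⟨u₀, hu₀⟩ := hU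
  obtain ⟨a, ⟨hu₀a, ha⟩, -⟩ := h u₀ hu₀
  obtain ⟨u, v, hleaf⟩ := (hG.induce U).exists_forall_adj_iff
    (a := ⟨u₀, hu₀⟩) (b := ⟨a, ha⟩) hu₀a
  obtain ⟨c, ⟨huc, hc⟩, d, ⟨hud, hd⟩, hcd⟩ := h u u.2
  exact hcd (congrArg Subtype.val
    (((hleaf ⟨c, hc⟩).1 huc).trans ((hleaf ⟨d, hd⟩).1 hud).symm))

end Forest

variable [Fintype V] {F : Type} [Field F]

lemma sVec_adjMatrix_apply (v w : V) :
    sVec G (G.adjMatrix F) v w =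
      if w ∈ nullSupp (G.adjMatrix F) ∧ G.Adj v w then 1 else 0 := by
  unfold sVec
  split_ifs with h
  · exact if_pos h.2
  · rfl

lemma dotProduct_sVec_eq_zero {x : V → F} (hx : G.adjMatrix F *ᵥ x = 0) (v : V) :
    x ⬝ᵥ sVec G (G.adjMatrix F) v = 0 := by
  rw [← Pi.zero_apply (M := fun _ => F) v, ← hx]
  refine Finset.sum_congr rfl fun w _ => ?_
  by_cases hw : w ∈ nullSupp (G.adjMatrix F)
  · simp [sVec_adjMatrix_apply, hw, adjMatrix_apply, mul_comm]
  · simp [apply_eq_zero_of_notMem_nullSupp hx hw]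

lemma nontrivial_neighborSet_inter_nullSupp {v : V} (hv : sVec G (G.adjMatrix F) v ≠ 0) :
    (G.neighborSet v ∩ nullSupp (G.adjMatrix F)).Nontrivial := by
  obtain ⟨x, hx⟩ := Function.ne_iff.mp hv
  rw [sVec_adjMatrix_apply] at hx
  obtain ⟨hxS, hvx⟩ : x ∈ nullSupp (G.adjMatrix F) ∧ G.Adj v x := by
    by_contra h
    exact hx (if_neg h)
  refine ⟨x, ⟨hvx, hxS⟩, ?_⟩
  by_contra! hunique
  obtain ⟨y, hy, hyx⟩ := hxS
  have hdot := dotProduct_sVec_eq_zero hy v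
  rw [dotProduct, Finset.sum_eq_single x (fun w _ hwx => ?_) (by simp),
    sVec_adjMatrix_apply, if_pos ⟨⟨y, hy, hyx⟩, hvx⟩, mul_one] at hdot
  · exact hyx hdot
  · rw [sVec_adjMatrix_apply, if_neg fun h => hwx (hunique w ⟨h.2, h.1⟩).symm, mul_zero]

variable [DecidableEq V]

lemma single_mem_range_adjMatrix {v : V} (hv : v ∉ nullSupp (G.adjMatrix F)) :
    Pi.single v 1 ∈ LinearMap.range (G.adjMatrix F).mulVecLin := by
  rw [(isSymm_adjMatrix G).mem_range_mulVecLin_iff]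
  intro x hx
  rw [dotProduct_single, mul_one, apply_eq_zero_of_notMem_nullSupp hx hv]

lemma sVec_mem_range_adjMatrix (v : V) :
    sVec G (G.adjMatrix F) v ∈ LinearMap.range (G.adjMatrix F).mulVecLin :=
  (isSymm_adjMatrix G).mem_range_mulVecLin_iff _ |>.2 fun _ hx => dotProduct_sVec_eq_zero hx v

lemma col_adjMatrix_eq_sVec_add (w : V) :
    (G.adjMatrix F).col w = sVec G (G.adjMatrix F) w +
      ∑ x ∈ Finset.univ.filter (fun x => G.Adj w x ∧ x ∉ nullSupp (G.adjMatrix F)),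
        Pi.single x 1 := by
  ext j
  by_cases hj : j ∈ nullSupp (G.adjMatrix F) <;>
    simp [sVec_adjMatrix_apply, Finset.sum_apply, Pi.single_apply, hj, G.adj_comm j w]

section Leaf

variable {u v : V}

lemma notMem_nullSupp_of_forall_adj_iff (hleaf : ∀ w, G.Adj u w ↔ w = v) :
    v ∉ nullSupp (G.adjMatrix F) := by
  rintro ⟨x, hx, hxv⟩
  apply hxv
  simpa [mulVec, dotProduct, adjMatrix_apply, hleaf] using congrFun hx u

lemma adjMatrix_mulVec_single_of_forall_adj_iff (hleaf : ∀ w, G.Adj u w ↔ w = v) :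
    G.adjMatrix F *ᵥ Pi.single u 1 = Pi.single v 1 := by
  ext j
  simp [G.adj_comm j u, hleaf, Pi.single_apply]

lemma deleteIncidenceSet_adjMatrix_mulVec {z : V → F} (hz : z v = 0) :
    (G.deleteIncidenceSet v).adjMatrix F *ᵥ z = Function.update (G.adjMatrix F *ᵥ z) v 0 := by
  ext j
  by_cases hj : j = v
  · subst hj
    simp [mulVec, dotProduct, deleteIncidenceSet_adj]
  · rw [Function.update_of_ne hj]
    refine Finset.sum_congr rfl fun w _ => ?_
    by_cases hw : w = v
    · simp [hw, hz]
    · simp [adjMatrix_apply, deleteIncidenceSet_adj, hj, hw]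

lemma mem_nullSupp_deleteIncidenceSet (hleaf : ∀ w, G.Adj u w ↔ w = v) {w : V}
    (hw : w ∈ nullSupp (G.adjMatrix F)) (hwu : w ≠ u) :
    w ∈ nullSupp ((G.deleteIncidenceSet v).adjMatrix F) := by
  obtain ⟨x, hx, hxw⟩ := hw
  -- `A (x - x u • e_u) = - x u • e_v`, and deleting the edges at `v` kills the `v`-th row.
  have hvu : v ≠ u := ((hleaf v).2 rfl).ne'
  refine ⟨x - x u • Pi.single u 1, ?_, by simpa [hwu] using hxw⟩
  have hxv : x v = 0 := by_contra fun h => notMem_nullSupp_of_forall_adj_iff hleaf ⟨x, hx, h⟩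
  rw [deleteIncidenceSet_adjMatrix_mulVec (by simp [hvu, hxv]), mulVec_sub, mulVec_smul, hx,
    adjMatrix_mulVec_single_of_forall_adj_iff hleaf]
  ext j
  by_cases hj : j = v <;> simp [hj]

theorem IsAcyclic.not_adj_of_mem_nullSupp (hG : G.IsAcyclic) {x y : V}
    (hx : x ∈ nullSupp (G.adjMatrix F)) (hy : y ∈ nullSupp (G.adjMatrix F)) : ¬G.Adj x y := by
  induction G using WellFoundedLT.induction generalizing x y with
  | ind G ih =>
  intro hxy
  obtain ⟨u, v, hleaf⟩ := hG.exists_forall_adj_iff hxy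
  have hv := notMem_nullSupp_of_forall_adj_iff (F := F) hleaf
  have hxv : x ≠ v := fun h => hv (h ▸ hx)
  have hyv : y ≠ v := fun h => hv (h ▸ hy)
  have hxu : x ≠ u := fun h => hyv ((hleaf y).1 (h ▸ hxy))
  have hyu : y ≠ u := fun h => hxv ((hleaf x).1 (h ▸ hxy.symm))
  have hlt : G.deleteIncidenceSet v < G := (G.deleteIncidenceSet_le v).lt_of_not_ge
    fun hle => (deleteIncidenceSet_adj.1 (hle ((hleaf v).2 rfl))).2.2 rfl
  exact ih _ hlt (hG.anti (G.deleteIncidenceSet_le v))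
    -- `convert` identifies the `DecidableRel` instance of the deleted graph with the classical one
    (by convert mem_nullSupp_deleteIncidenceSet hleaf hx hxu)
    (by convert mem_nullSupp_deleteIncidenceSet hleaf hy hyu)
    (deleteIncidenceSet_adj.2 ⟨hxy, hxv, hyv⟩)

end Leaf

noncomputable def nullSuppBasis (G : SimpleGraph V) (F : Type) [Field F] : Set (V → F) :=
  (⋃ v ∈ {v : V | v ∉ nullSupp (G.adjMatrix F)},
    {Pi.single v (1 : F), sVec G (G.adjMatrix F) v}) \ {0}

lemma nullSuppBasis_eq : nullSuppBasis G F =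
    (fun v => Pi.single v 1) '' {v | v ∉ nullSupp (G.adjMatrix F)} ∪
      sVec G (G.adjMatrix F) ''
        {v | v ∉ nullSupp (G.adjMatrix F) ∧ sVec G (G.adjMatrix F) v ≠ 0} := by
  ext b
  simp only [nullSuppBasis, Set.mem_sdiff, Set.mem_iUnion, Set.mem_insert_iff, Set.mem_union,
    Set.mem_image, Set.mem_ofPred_eq, Set.mem_singleton_iff]
  constructor
  · rintro ⟨⟨v, hv, rfl | rfl⟩, hb⟩
    exacts [Or.inl ⟨v, hv, rfl⟩, Or.inr ⟨v, ⟨hv, hb⟩, rfl⟩]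
  · rintro (⟨v, hv, rfl⟩ | ⟨v, ⟨hv, hb⟩, rfl⟩)
    exacts [⟨⟨v, hv, Or.inl rfl⟩, by simp⟩, ⟨⟨v, hv, Or.inr rfl⟩, hb⟩]

theorem IsAcyclic.linearIndepOn_sVec (hG : G.IsAcyclic) :
    LinearIndepOn F (sVec G (G.adjMatrix F))
      {v | v ∉ nullSupp (G.adjMatrix F) ∧ sVec G (G.adjMatrix F) v ≠ 0} := by
  rw [linearIndepOn_iff]
  intro l hl hcomb
  by_contra hl0
  obtain ⟨t₀, ht₀⟩ := Finsupp.support_nonempty_iff.2 hl0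
  refine hG.not_forall_nontrivial_neighborSet_inter
    (U := l.support ∪ {x | x ∈ nullSupp (G.adjMatrix F) ∧ ∃ t ∈ l.support, G.Adj t x})
    ⟨t₀, Or.inl ht₀⟩ ?_
  rintro w (hw | ⟨hwS, t, ht, htw⟩)
  · exact (nontrivial_neighborSet_inter_nullSupp ((Finsupp.mem_supported F l).1 hl hw).2).mono
      fun x ⟨hwx, hxS⟩ => ⟨hwx, Or.inr ⟨hxS, w, hw, hwx⟩⟩
  · have hsum : ∑ i ∈ l.support with G.Adj i w, l i = 0 := by
      have := congrFun hcomb w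
      simp only [Finsupp.linearCombination_apply, Finsupp.sum, Finset.sum_apply, Pi.smul_apply,
        sVec_adjMatrix_apply, hwS, true_and, smul_eq_mul, mul_ite, mul_one, mul_zero,
        Pi.zero_apply] at this
      rwa [Finset.sum_filter]
    have htw' : t ∈ l.support.filter (G.Adj · w) := Finset.mem_filter.2 ⟨ht, htw⟩
    obtain ⟨t', ht', -⟩ := Finset.exists_ne_zero_of_sum_ne_zero (f := l)
      (s := (l.support.filter (G.Adj · w)).erase t) (by
        rw [Finset.sum_erase_eq_sub htw', hsum, zero_sub, neg_ne_zero]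
        exact Finsupp.mem_support_iff.1 ht)
    obtain ⟨ht't, ht'⟩ := Finset.mem_erase.1 ht'
    obtain ⟨ht'l, ht'w⟩ := Finset.mem_filter.1 ht'
    exact ⟨t, ⟨htw.symm, Or.inl ht⟩, t', ⟨ht'w.symm, Or.inl ht'l⟩, ht't.symm⟩

theorem IsAcyclic.linearIndepOn_nullSuppBasis (hG : G.IsAcyclic) :
    LinearIndepOn F id (nullSuppBasis G F) := by
  rw [nullSuppBasis_eq]
  refine ((Pi.linearIndependent_single_one V F).linearIndepOn _).id_image.id_union
    hG.linearIndepOn_sVec.id_image ?_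
  have hsingle : Submodule.span F
        ((fun v => Pi.single v (1 : F)) '' {v | v ∉ nullSupp (G.adjMatrix F)})
      ≤ Submodule.pi (nullSupp (G.adjMatrix F)) fun _ => (⊥ : Submodule F F) := by
    rw [Submodule.span_le]
    rintro _ ⟨v, hv, rfl⟩ w hw
    exact (Submodule.mem_bot F).2 (Pi.single_eq_of_ne (fun h : w = v => hv (h ▸ hw)) 1)
  have hsVec : Submodule.span F (sVec G (G.adjMatrix F) ''
        {v | v ∉ nullSupp (G.adjMatrix F) ∧ sVec G (G.adjMatrix F) v ≠ 0})
      ≤ Submodule.pi (nullSupp (G.adjMatrix F))ᶜ fun _ => (⊥ : Submodule F F) := by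
    rw [Submodule.span_le]
    rintro _ ⟨v, -, rfl⟩ w hw
    exact (Submodule.mem_bot F).2 (by rw [sVec_adjMatrix_apply, if_neg fun h => hw h.1])
  refine Disjoint.mono hsingle hsVec (Submodule.disjoint_def.2 fun z hS hSc => ?_)
  ext w
  by_cases hw : w ∈ nullSupp (G.adjMatrix F)
  exacts [hS w hw, hSc w hw]

theorem IsAcyclic.span_nullSuppBasis (hG : G.IsAcyclic) :
    Submodule.span F (nullSuppBasis G F) = LinearMap.range (G.adjMatrix F).mulVecLin := by
  rw [nullSuppBasis_eq]
  apply le_antisymm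
  · rw [Submodule.span_le]
    rintro _ (⟨v, hv, rfl⟩ | ⟨v, -, rfl⟩)
    exacts [single_mem_range_adjMatrix hv, sVec_mem_range_adjMatrix v]
  · rw [Matrix.range_mulVecLin, Submodule.span_le]
    rintro _ ⟨w, rfl⟩
    rw [col_adjMatrix_eq_sVec_add]
    refine Submodule.add_mem _ ?_ (Submodule.sum_mem _ fun x hx =>
      Submodule.subset_span (Or.inl ⟨x, (Finset.mem_filter.1 hx).2.2, rfl⟩))
    by_cases hw0 : sVec G (G.adjMatrix F) w = 0
    · rw [hw0]
      exact Submodule.zero_mem _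
    obtain ⟨x, hwx, hxS⟩ := (nontrivial_neighborSet_inter_nullSupp hw0).nonempty
    have hw : w ∉ nullSupp (G.adjMatrix F) := fun hw => hG.not_adj_of_mem_nullSupp hw hxS hwx
    exact Submodule.subset_span (Or.inr ⟨w, ⟨hw, hw0⟩, rfl⟩)

end SimpleGraph

theorem stmt14 {V : Type} [Fintype V] [DecidableEq V] {F : Type} [Field F]
    (G : SimpleGraph V) (hG : G.IsAcyclic) :
    LinearIndependent F
      (fun b : ↥((⋃ v ∈ {v : V | v ∉ nullSupp (G.adjMatrix F)},
          {Pi.single v (1 : F), sVec G (G.adjMatrix F) v}) \ {0}) => (b : V → F)) ∧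
    Submodule.span F
        ((⋃ v ∈ {v : V | v ∉ nullSupp (G.adjMatrix F)},
          {Pi.single v (1 : F), sVec G (G.adjMatrix F) v}) \ {0}) =
      LinearMap.range (G.adjMatrix F).mulVecLin :=
  ⟨hG.linearIndepOn_nullSuppBasis, hG.span_nullSuppBasis⟩
end
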